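/- Let n ≥ 1, let F be the 2n×2n matrix with F_{i,2n+1−i} = 1 for 1 ≤ i ≤ n, F_{i,2n+1−i} = −1 for n+1 ≤ i ≤ 2n, and all other entries 0, and define sp(2n,ℂ) = {X ∈ M_{2n}(ℂ) : XᵀF + FX = 0}. Let Λ = Σ_{i=1}^{n} E_{i,i+1} − Σ_{i=n+1}^{2n−1} E_{i,i+1}. Then Λ ∈ sp(2n,ℂ), and the centralizer {X ∈ sp(2n,ℂ) : Λ·X = X·Λ} equals the ℂ-linear span of the odd powers Λ^{2k−1} for 1 ≤ k ≤ n; in particular it is n-dimensional. -/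

import Mathlib

/-!
`Λ` is a shift matrix with nonzero weights, so a matrix commuting with it is determined by its
first row; hence its centralizer in `M_{2n}(ℂ)` consists of the polynomials `∑_{p < 2n} c_p Λ^p`,
and these powers are linearly independent. Since `Λ` is skew-adjoint for `F`, we have
`(Λ^p)ᵀ F = (-1)^p F Λ^p`: the odd powers lie in `sp(2n, ℂ)`, and for `X = ∑ c_p Λ^p` the
condition `Xᵀ F + F X = 0` reads `F ∑ ((-1)^p + 1) c_p Λ^p = 0`, which forces `c_p = 0` for
even `p` because `F` is invertible.
-/

open Matrix Finset

def weightedShift {R : Type*} [Zero R] (m : ℕ) (w : ℕ → R) : Matrix (Fin m) (Fin m) R :=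
  of fun i j => if (j : ℕ) = i + 1 then w i else 0

theorem weightedShift_apply {R : Type*} [Zero R] {m : ℕ} (w : ℕ → R) (i j : Fin m) :
    weightedShift m w i j = if (j : ℕ) = i + 1 then w i else 0 := rfl

section WeightedShift

variable {R : Type*} [CommSemiring R] {m : ℕ} (w : ℕ → R)

theorem weightedShift_pow_apply (p : ℕ) (i j : Fin m) :
    (weightedShift m w ^ p) i j = if (j : ℕ) = i + p then ∏ t ∈ range p, w (i + t) else 0 := by
  induction p generalizing j with
  | zero => simp [one_apply, Fin.ext_iff, eq_comm]
  | succ p ih =>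
    simp only [pow_succ, mul_apply, ih, weightedShift_apply, ite_mul, zero_mul]
    by_cases hp : i + p < m
    · rw [sum_eq_single_of_mem ⟨i + p, hp⟩ (mem_univ _) fun k _ hk => by
        rw [if_neg (by simpa [Fin.ext_iff] using hk)], if_pos rfl, prod_range_succ]
      simp only [mul_ite, mul_zero, ← add_assoc]
    · rw [if_neg (by omega), sum_eq_zero fun k _ => if_neg (by omega)]

theorem weightedShift_pow_zero_apply (p : ℕ) (j : Fin (m + 1)) :
    (weightedShift (m + 1) w ^ p) 0 j = if (j : ℕ) = p then ∏ t ∈ range p, w t else 0 := by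
  simp [weightedShift_pow_apply]

theorem weightedShift_pow_mul_zero_apply (p j : Fin (m + 1))
    (Y : Matrix (Fin (m + 1)) (Fin (m + 1)) R) :
    (weightedShift (m + 1) w ^ (p : ℕ) * Y) 0 j = (∏ t ∈ range p, w t) * Y p j := by
  rw [mul_apply, sum_eq_single_of_mem p (mem_univ _) fun k _ hk => by
    rw [weightedShift_pow_zero_apply, if_neg (by simpa [Fin.ext_iff] using hk), zero_mul],
    weightedShift_pow_zero_apply, if_pos rfl]

end WeightedShift

section WeightedShiftField

variable {K : Type*} [Field K] {m : ℕ} {w : ℕ → K}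

theorem linearIndependent_weightedShift_pow (hw : ∀ t, w t ≠ 0) :
    LinearIndependent K fun p : Fin m => weightedShift m w ^ (p : ℕ) := by
  cases m with
  | zero => exact linearIndependent_empty_type
  | succ m =>
    refine Fintype.linearIndependent_iff.2 fun g hg p => ?_
    have h0p := congr_fun₂ hg 0 p
    simp only [Matrix.sum_apply, Matrix.smul_apply, smul_eq_mul, weightedShift_pow_zero_apply,
      Matrix.zero_apply] at h0p
    rw [sum_eq_single_of_mem p (mem_univ _) fun q _ hq => by
      rw [if_neg (Fin.val_ne_of_ne hq.symm), mul_zero], if_pos rfl] at h0p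
    exact (mul_eq_zero.1 h0p).resolve_right (prod_ne_zero_iff.2 fun t _ => hw t)

theorem eq_zero_of_commute_weightedShift (hw : ∀ t, w t ≠ 0)
    {Y : Matrix (Fin (m + 1)) (Fin (m + 1)) K} (hY : Commute (weightedShift (m + 1) w) Y)
    (h0 : Y 0 = 0) : Y = 0 := by
  ext p j
  have h := congr_fun₂ (hY.pow_left p).eq 0 j
  rw [weightedShift_pow_mul_zero_apply, mul_apply] at h
  simp only [h0, Pi.zero_apply, zero_mul, sum_const_zero] at h
  exact (mul_eq_zero.1 h).resolve_left (prod_ne_zero_iff.2 fun t _ => hw t)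

theorem exists_eq_sum_smul_pow_of_commute_weightedShift (hw : ∀ t, w t ≠ 0)
    {X : Matrix (Fin m) (Fin m) K} (hX : Commute (weightedShift m w) X) :
    ∃ c : Fin m → K, X = ∑ p, c p • weightedShift m w ^ (p : ℕ) := by
  cases m with
  | zero => exact ⟨0, Subsingleton.elim _ _⟩
  | succ m =>
    refine ⟨fun p => X 0 p / ∏ t ∈ range p, w t, sub_eq_zero.1 ?_⟩
    refine eq_zero_of_commute_weightedShift hw (hX.sub_right (Commute.sum_right _ _ _ fun p _ =>
      ((Commute.refl _).pow_right _).smul_right _)) (funext fun j => ?_)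
    simp only [Matrix.sub_apply, Matrix.sum_apply, Matrix.smul_apply, smul_eq_mul,
      weightedShift_pow_zero_apply, mul_ite, mul_zero, Pi.zero_apply]
    rw [sum_eq_single_of_mem j (mem_univ _) fun q _ hq => if_neg (Fin.val_ne_of_ne hq.symm),
      if_pos rfl, div_mul_cancel₀ _ (prod_ne_zero_iff.2 fun t _ => hw t), sub_self]

end WeightedShiftField

namespace Matrix

variable {ι : Type*} [Fintype ι]

theorem isSkewAdjoint_iff_transpose_mul_add_mul_eq_zero {R : Type*} [CommRing R]
    {J A : Matrix ι ι R} : J.IsSkewAdjoint A ↔ Aᵀ * J + J * A = 0 := by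
  rw [Matrix.IsSkewAdjoint, IsAdjointPair, Matrix.mul_neg, add_eq_zero_iff_eq_neg]

variable [DecidableEq ι]

theorem IsSkewAdjoint.isAdjointPair_pow {R : Type*} [CommRing R] {F Λ : Matrix ι ι R}
    (h : F.IsSkewAdjoint Λ) (p : ℕ) : F.IsAdjointPair F (Λ ^ p) ((-Λ) ^ p) := by
  induction p with
  | zero => simp [IsAdjointPair]
  | succ p ih =>
    unfold IsAdjointPair at *
    rw [pow_succ, transpose_mul, Matrix.mul_assoc, ih, ← Matrix.mul_assoc, h, Matrix.mul_assoc,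
      ← pow_succ']

theorem IsSkewAdjoint.pow_of_odd {R : Type*} [CommRing R] {F Λ : Matrix ι ι R}
    (h : F.IsSkewAdjoint Λ) {p : ℕ} (hp : Odd p) : F.IsSkewAdjoint (Λ ^ p) := by
  simpa only [Matrix.IsSkewAdjoint, hp.neg_pow] using h.isAdjointPair_pow p

theorem IsSkewAdjoint.coeff_eq_zero_of_even {K : Type*} [Field K] [NeZero (2 : K)]
    {F Λ : Matrix ι ι K} (hF : IsUnit F) (hΛ : F.IsSkewAdjoint Λ) {m : ℕ}
    (hli : LinearIndependent K fun p : Fin m => Λ ^ (p : ℕ)) {c : Fin m → K}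
    (hX : F.IsSkewAdjoint (∑ p, c p • Λ ^ (p : ℕ))) {p : Fin m} (hp : Even (p : ℕ)) :
    c p = 0 := by
  have hsum : F * ∑ q : Fin m, ((-1) ^ (q : ℕ) * c q + c q) • Λ ^ (q : ℕ) = 0 := by
    rw [← isSkewAdjoint_iff_transpose_mul_add_mul_eq_zero.1 hX, transpose_sum, Matrix.sum_mul,
      Matrix.mul_sum, Matrix.mul_sum, ← sum_add_distrib]
    refine sum_congr rfl fun q _ => ?_
    rw [transpose_smul, Matrix.smul_mul, hΛ.isAdjointPair_pow q, ← neg_one_smul K Λ, smul_pow,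
      add_smul, mul_smul, Matrix.mul_add, Matrix.mul_smul, Matrix.mul_smul, Matrix.mul_smul,
      smul_comm]
  have hp0 := Fintype.linearIndependent_iff.1 hli _ ((hF.mul_right_eq_zero).1 hsum) p
  rw [hp.neg_one_pow, one_mul, ← two_mul] at hp0
  exact (mul_eq_zero.1 hp0).resolve_left two_ne_zero

theorem IsSkewAdjoint.span_odd_pow_le {R : Type*} [CommRing R] {F Λ : Matrix ι ι R}
    (h : F.IsSkewAdjoint Λ) (n : ℕ) :
    Submodule.span R (Set.range fun k : Fin n => Λ ^ (2 * (k : ℕ) + 1)) ≤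
      skewAdjointMatricesSubmodule F ⊓ Subalgebra.toSubmodule (Subalgebra.centralizer R {Λ}) := by
  refine Submodule.span_le.2 ?_
  rintro _ ⟨k, rfl⟩
  exact ⟨(mem_skewAdjointMatricesSubmodule _ _).2 (h.pow_of_odd (odd_two_mul_add_one _)),
    (Subalgebra.mem_centralizer_iff R).2 fun _ hΛ => by
      rw [Set.mem_singleton_iff.1 hΛ, pow_mul_comm']⟩

end Matrix

theorem sum_smul_pow_mem_span_odd_pow {K A : Type*} [Semiring K] [Semiring A] [Module K A]
    (x : A) {n : ℕ} {c : Fin (2 * n) → K} (hc : ∀ p : Fin (2 * n), Even (p : ℕ) → c p = 0) :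
    ∑ p, c p • x ^ (p : ℕ) ∈
      Submodule.span K (Set.range fun k : Fin n => x ^ (2 * (k : ℕ) + 1)) := by
  refine Submodule.sum_mem _ fun p _ => ?_
  rcases Nat.even_or_odd p with hp | ⟨k, hk⟩
  · rw [hc p hp, zero_smul]
    exact Submodule.zero_mem _
  · refine Submodule.smul_mem _ _ (Submodule.subset_span ⟨⟨k, by omega⟩, ?_⟩)
    simp only [hk]

section SymplecticForm

variable {R : Type*} [CommRing R] {n : ℕ}

def symplecticSign (n t : ℕ) : R := if t < n then 1 else -1

theorem symplecticSign_ne_zero [Nontrivial R] (t : ℕ) : (symplecticSign n t : R) ≠ 0 := by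
  unfold symplecticSign; split_ifs <;> simp

theorem symplecticSign_mul_self (t : ℕ) : symplecticSign n t * symplecticSign n t = (1 : R) := by
  unfold symplecticSign; split_ifs <;> simp

theorem symplecticSign_rev (t : Fin (2 * n)) :
    symplecticSign n (t.rev : ℕ) = -(symplecticSign n t : R) := by
  unfold symplecticSign
  rw [Fin.val_rev]
  split_ifs <;> first | omega | simp

/- With 0-based indices the paper's entry `F_{i,2n+1-i}` sits at `(i, i.rev)`, and the paper's `Λ`
is `weightedShift (2 * n) (symplecticSign n)`. -/
variable (R n) in
def symplecticForm : Matrix (Fin (2 * n)) (Fin (2 * n)) R :=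
  of fun i j => if j = i.rev then symplecticSign n i else 0

theorem symplecticForm_mul_apply (X : Matrix (Fin (2 * n)) (Fin (2 * n)) R) (i j : Fin (2 * n)) :
    (symplecticForm R n * X) i j = symplecticSign n i * X i.rev j := by
  rw [mul_apply, sum_eq_single_of_mem i.rev (mem_univ _) fun k _ hk => by
    simp [symplecticForm, hk]]
  simp [symplecticForm]

theorem transpose_mul_symplecticForm_apply (X : Matrix (Fin (2 * n)) (Fin (2 * n)) R)
    (i j : Fin (2 * n)) :
    (Xᵀ * symplecticForm R n) i j = X j.rev i * symplecticSign n j.rev := by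
  rw [mul_apply, sum_eq_single_of_mem j.rev (mem_univ _) fun k _ hk => by
    rw [transpose_apply, symplecticForm, of_apply, if_neg fun h => hk (by rw [h, Fin.rev_rev]),
      mul_zero]]
  simp [symplecticForm]

theorem symplecticForm_mul_self : symplecticForm R n * symplecticForm R n = -1 := by
  ext i j
  rw [symplecticForm_mul_apply, neg_apply, one_apply]
  by_cases h : i = j
  · subst h
    simp only [symplecticForm, of_apply, Fin.rev_rev, if_true]
    rw [symplecticSign_rev, mul_neg, symplecticSign_mul_self]
  · simp [symplecticForm, h, Ne.symm h]

theorem isUnit_symplecticForm : IsUnit (symplecticForm R n) :=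
  ⟨⟨symplecticForm R n, -symplecticForm R n,
    by rw [Matrix.mul_neg, symplecticForm_mul_self, neg_neg],
    by rw [Matrix.neg_mul, symplecticForm_mul_self, neg_neg]⟩, rfl⟩

theorem isSkewAdjoint_weightedShift_symplecticSign :
    (symplecticForm R n).IsSkewAdjoint (weightedShift (2 * n) (symplecticSign n)) := by
  ext i j
  rw [Matrix.mul_neg, neg_apply, transpose_mul_symplecticForm_apply, symplecticForm_mul_apply,
    weightedShift_apply, weightedShift_apply]
  by_cases h : (i : ℕ) + j = 2 * n
  · rw [if_pos (by rw [Fin.val_rev]; omega), if_pos (by rw [Fin.val_rev]; omega),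
      symplecticSign_mul_self, symplecticSign_rev, mul_neg, symplecticSign_mul_self, neg_neg]
  · rw [if_neg (by rw [Fin.val_rev]; omega), if_neg (by rw [Fin.val_rev]; omega), zero_mul,
      mul_zero, neg_zero]

end SymplecticForm

theorem stmt_2_general (n : ℕ)
    (F Λ : Matrix (Fin (2*n)) (Fin (2*n)) ℂ)
    (hF : ∀ i j : Fin (2*n),
      F i j = if (i : ℕ) + (j : ℕ) + 2 = 2*n + 1 then (if (i : ℕ) < n then 1 else -1) else 0)
    (hΛ : ∀ i j : Fin (2*n),
      Λ i j = if (j : ℕ) = (i : ℕ) + 1 then (if (i : ℕ) < n then 1 else -1) else 0) :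
    (Λᵀ * F + F * Λ = 0)
    ∧ {X : Matrix (Fin (2*n)) (Fin (2*n)) ℂ | Xᵀ * F + F * X = 0 ∧ Λ * X = X * Λ}
        = (Submodule.span ℂ (Set.range fun k : Fin n => Λ ^ (2*(k : ℕ) + 1)) :
            Set (Matrix (Fin (2*n)) (Fin (2*n)) ℂ))
    ∧ Module.finrank ℂ
        (Submodule.span ℂ (Set.range fun k : Fin n => Λ ^ (2*(k : ℕ) + 1))) = n := by
  obtain rfl : F = symplecticForm ℂ n := by
    ext i j
    rw [hF, symplecticForm, of_apply]
    exact if_congr (by rw [Fin.ext_iff, Fin.val_rev]; omega) rfl rfl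
  obtain rfl : Λ = weightedShift (2 * n) (symplecticSign n) := ext hΛ
  have hskew := isSkewAdjoint_weightedShift_symplecticSign (R := ℂ) (n := n)
  have hw : ∀ t, (symplecticSign n t : ℂ) ≠ 0 := symplecticSign_ne_zero
  have hli := linearIndependent_weightedShift_pow (m := 2 * n) hw
  simp only [← isSkewAdjoint_iff_transpose_mul_add_mul_eq_zero]
  refine ⟨hskew, Set.ext fun X => ⟨?_, fun hX => ?_⟩, ?_⟩
  · rintro ⟨hXF, hXΛ⟩
    obtain ⟨c, rfl⟩ := exists_eq_sum_smul_pow_of_commute_weightedShift hw hXΛ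
    exact sum_smul_pow_mem_span_odd_pow _ fun p hp =>
      hskew.coeff_eq_zero_of_even isUnit_symplecticForm hli hXF hp
  · obtain ⟨hXF, hXΛ⟩ := hskew.span_odd_pow_le n hX
    exact ⟨(mem_skewAdjointMatricesSubmodule _ _).1 hXF,
      (Subalgebra.mem_centralizer_iff ℂ).1 hXΛ _ rfl⟩
  · have hodd : Function.Injective fun k : Fin n => (⟨2 * k + 1, by omega⟩ : Fin (2 * n)) :=
      fun k l h => Fin.ext (by simpa using h)
    exact (finrank_span_eq_card (hli.comp _ hodd)).trans (Fintype.card_fin n)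

/-- The centralizer of the regular nilpotent element
`Λ = Σ_{i=1}^n E_{i,i+1} − Σ_{i=n+1}^{2n−1} E_{i,i+1}` in `sp(2n, ℂ)` (defined by the
antidiagonal symplectic form `F`) is the span of the odd powers `Λ^{2k−1}`, `1 ≤ k ≤ n`,
which is `n`-dimensional. -/
theorem stmt_2 (n : ℕ) (hn : 1 ≤ n)
    (F Λ : Matrix (Fin (2*n)) (Fin (2*n)) ℂ)
    (hF : ∀ i j : Fin (2*n),
      F i j = if (i : ℕ) + (j : ℕ) + 2 = 2*n + 1 then (if (i : ℕ) < n then 1 else -1) else 0)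
    (hΛ : ∀ i j : Fin (2*n),
      Λ i j = if (j : ℕ) = (i : ℕ) + 1 then (if (i : ℕ) < n then 1 else -1) else 0) :
    (Λᵀ * F + F * Λ = 0)
    ∧ {X : Matrix (Fin (2*n)) (Fin (2*n)) ℂ | Xᵀ * F + F * X = 0 ∧ Λ * X = X * Λ}
        = (Submodule.span ℂ (Set.range fun k : Fin n => Λ ^ (2*(k : ℕ) + 1)) :
            Set (Matrix (Fin (2*n)) (Fin (2*n)) ℂ))
    ∧ Module.finrank ℂ
        (Submodule.span ℂ (Set.range fun k : Fin n => Λ ^ (2*(k : ℕ) + 1))) = n :=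
  stmt_2_general n F Λ hF hΛ
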